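/- arXiv:2111.01542 — 2 statements merged into one kernel-verified Lean document; each statement's English description precedes it below -/
import Mathlib

section
/- Assume Assumption 1 holds and fix a positive integer q. If the rank of C exceeds q (i.e., α_{q+1}(C) ≠ 0; in particular this includes infinite rank), then with probability 1, i(Ĉ_n, δ_n) > q for all sufficiently large n. -/
open MeasureTheory Filter

/-- Abstract singular-value data on the (Hilbert) space `𝒮` of Hilbert–Schmidt operators on a
separable infinite-dimensional real Hilbert space `H`.  `IsPos S` encodes `S ∈ 𝒮⁺` (nonnegative
self-adjoint), and `α S l` is the `(l+1)`-st singular value of `S` (so `α S 0 ≥ α S 1 ≥ … ≥ 0`,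
listed with multiplicity).  The field `mirsky` encodes the Schmidt–Mirsky fact that
`S ↦ ‖S - Q_j(S)‖_𝒮 = (∑_{l > j} α_l(S)²)^{1/2}` (distance to the rank-`j` operators)
is `1`-Lipschitz in the Hilbert–Schmidt norm. -/
structure SingularValueData (𝒮 : Type*) [NormedAddCommGroup 𝒮] [MeasurableSpace 𝒮] where
  IsPos : 𝒮 → Prop
  α : 𝒮 → ℕ → ℝ
  nonneg : ∀ S l, 0 ≤ α S l
  antitone : ∀ S l, α S (l + 1) ≤ α S l
  sq_summable : ∀ S, Summable fun l => α S l ^ 2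
  mirsky : ∀ A B : 𝒮, ∀ j : ℕ,
    Real.sqrt (∑' l, α A (j + l) ^ 2) ≤ Real.sqrt (∑' l, α B (j + l) ^ 2) + ‖A - B‖
  measurable_alpha : ∀ l, Measurable fun S => α S l
  measurableSet_pos : MeasurableSet {S | IsPos S}
  measurable_tail : ∀ j, Measurable fun S => Real.sqrt (∑' l, α S (j + l) ^ 2)

namespace SingularValueData

variable {𝒮 : Type*} [NormedAddCommGroup 𝒮] [MeasurableSpace 𝒮]

/-- `tail S j = ‖S - Q_j(S)‖_𝒮 = (∑_{l > j} α_l(S)²)^{1/2}` (singular values `1`-indexed). -/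
noncomputable def tail (sv : SingularValueData 𝒮) (S : 𝒮) (j : ℕ) : ℝ :=
  Real.sqrt (∑' l, sv.α S (j + l) ^ 2)

/-- `i(S, δ) = min {j ≥ 1 : ‖S - Q_j(S)‖_𝒮 < δ}`. -/
noncomputable def iDim (sv : SingularValueData 𝒮) (S : 𝒮) (δ : ℝ) : ℕ :=
  sInf {j | 1 ≤ j ∧ sv.tail S j < δ}

end SingularValueData

/-! Every `j ≤ q` has `‖Ĉ_n - Q_j(Ĉ_n)‖ ≥ ‖C - Q_q(C)‖ - ‖Ĉ_n - C‖` by monotonicity of the tail and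
the Schmidt–Mirsky bound. Since `α_{q+1}(C) ≠ 0` the tail `‖C - Q_q(C)‖` is a fixed positive
number, while `δ_n + ‖Ĉ_n - C‖ < (2 + ε) ℛ(n) → 0`, so eventually no `j ≤ q` qualifies in the
definition of `i(Ĉ_n, δ_n)`. -/

namespace SingularValueData

variable {𝒮 : Type*} [NormedAddCommGroup 𝒮] [MeasurableSpace 𝒮] (sv : SingularValueData 𝒮)

theorem summable_shift (S : 𝒮) (j : ℕ) : Summable fun l => sv.α S (j + l) ^ 2 :=
  (sv.sq_summable S).comp_injective (add_right_injective j)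

theorem tail_antitone (S : 𝒮) : Antitone (sv.tail S) := by
  refine antitone_nat_of_succ_le fun j => Real.sqrt_le_sqrt ?_
  rw [(sv.summable_shift S j).tsum_eq_zero_add]
  simp only [add_zero, add_assoc, add_comm 1]
  linarith [sq_nonneg (sv.α S j)]

theorem α_le_tail (S : 𝒮) (j : ℕ) : sv.α S j ≤ sv.tail S j := by
  calc sv.α S j = Real.sqrt (sv.α S (j + 0) ^ 2) := (Real.sqrt_sq (sv.nonneg S j)).symm
    _ ≤ sv.tail S j :=
      Real.sqrt_le_sqrt ((sv.summable_shift S j).le_tsum 0 fun l _ => sq_nonneg _)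

theorem tendsto_tail_atTop (S : 𝒮) : Tendsto (sv.tail S) atTop (nhds 0) := by
  have h := (tendsto_sum_nat_add fun l => sv.α S l ^ 2).sqrt
  simp only [Real.sqrt_zero, add_comm _ (_ : ℕ)] at h
  exact h

theorem exists_tail_lt (S : 𝒮) {d : ℝ} (hd : 0 < d) : ∃ j, 1 ≤ j ∧ sv.tail S j < d :=
  ((eventually_ge_atTop 1).and (sv.tendsto_tail_atTop S |>.eventually (gt_mem_nhds hd))).exists

theorem tail_sub_norm_sub_le (S C : 𝒮) (j : ℕ) : sv.tail C j - ‖S - C‖ ≤ sv.tail S j := by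
  have := sv.mirsky C S j
  rw [norm_sub_rev] at this
  exact sub_le_iff_le_add.mpr this

theorem lt_iDim_of_le_tail {S : 𝒮} {d : ℝ} {q : ℕ} (hd : 0 < d) (h : d ≤ sv.tail S q) :
    q < sv.iDim S d := by
  obtain ⟨hJ1, hJd⟩ := Nat.sInf_mem (sv.exists_tail_lt S hd)
  by_contra! hJq
  exact (h.trans (sv.tail_antitone S hJq)).not_gt hJd

end SingularValueData

theorem rank_exceeds_q_detection_general
    {𝒮 : Type*} [NormedAddCommGroup 𝒮] [MeasurableSpace 𝒮]
    (sv : SingularValueData 𝒮)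
    {Ω : Type*} [MeasurableSpace Ω] (ℙ : Measure Ω)
    (Chat : ℕ → Ω → 𝒮)
    (C : 𝒮)
    (R : ℕ → ℝ)
    (hRlim : Tendsto R atTop (nhds 0))
    (hrate : ∀ᵐ ω ∂ℙ, ∀ᶠ n in atTop, ‖Chat n ω - C‖ < R n)
    (ε : ℝ) (hε : 0 < ε) (δ : ℕ → ℝ) (hδ : ∀ n, δ n = (1 + ε) * R n)
    (q : ℕ) (hrank : sv.α C q ≠ 0) :
    ∀ᵐ ω ∂ℙ, ∀ᶠ n in atTop, q < sv.iDim (Chat n ω) (δ n) := by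
  have htail : 0 < sv.tail C q :=
    ((sv.nonneg C q).lt_of_ne' hrank).trans_le (sv.α_le_tail C q)
  have hsmall : ∀ᶠ n in atTop, (2 + ε) * R n < sv.tail C q := by
    have := hRlim.const_mul (2 + ε)
    rw [mul_zero] at this
    exact this.eventually (gt_mem_nhds htail)
  filter_upwards [hrate] with ω hω
  filter_upwards [hω, hsmall] with n hclose hn
  have hR : 0 < R n := (norm_nonneg _).trans_lt hclose
  refine sv.lt_iDim_of_le_tail (by rw [hδ]; positivity) ?_
  calc δ n = (1 + ε) * R n := hδ n
    _ ≤ sv.tail C q - ‖Chat n ω - C‖ := by linarith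
    _ ≤ sv.tail (Chat n ω) q := sv.tail_sub_norm_sub_le _ _ q

/-- Under Assumption 1, if the rank of `C` exceeds the fixed positive integer
`q` (i.e. `α_{q+1}(C) ≠ 0`, which in `0`-indexed notation reads `sv.α C q ≠ 0`; this includes
the infinite-rank case), then almost surely `i(Ĉ_n, δ_n) > q` for all sufficiently large `n`. -/
theorem rank_exceeds_q_detection
    {𝒮 : Type*} [NormedAddCommGroup 𝒮] [MeasurableSpace 𝒮]
    (sv : SingularValueData 𝒮)
    {Ω : Type*} [MeasurableSpace Ω] (ℙ : Measure Ω) [IsProbabilityMeasure ℙ]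
    (Chat : ℕ → Ω → 𝒮) (hChat : ∀ n, Measurable (Chat n))
    (C : 𝒮) (hC : sv.IsPos C)
    (R : ℕ → ℝ) (hRpos : ∀ n, 0 < R n) (hRanti : StrictAnti R)
    (hRlim : Tendsto R atTop (nhds 0))
    (hrate : ∀ᵐ ω ∂ℙ, ∀ᶠ n in atTop, ‖Chat n ω - C‖ < R n)
    (ε : ℝ) (hε : 0 < ε) (δ : ℕ → ℝ) (hδ : ∀ n, δ n = (1 + ε) * R n)
    (q : ℕ) (hq : 1 ≤ q) (hrank : sv.α C q ≠ 0) :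
    ∀ᵐ ω ∂ℙ, ∀ᶠ n in atTop, q < sv.iDim (Chat n ω) (δ n) :=
  rank_exceeds_q_detection_general sv ℙ Chat C R hRlim hrate ε hε δ hδ q hrank
end

section
/- Assume Assumption 1 holds. If C = Σ_{l=1}^{q} a_l Ψ_l with a_q ≠ 0 for some finite q ≥ 1 (i.e., ⟨C,Ψ_q⟩_𝒮 ≠ 0 and ⟨C,Ψ_l⟩_𝒮 = 0 for all l > q), then with probability 1 there exists N such that ι(Ĉ_n, δ_n) = q for all n ≥ N. -/
open MeasureTheory Filter
open scoped RealInnerProductSpace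

variable {𝒮 : Type*} [NormedAddCommGroup 𝒮] [InnerProductSpace ℝ 𝒮]

/-- `P_j(S) = ∑_{l=1}^{j} ⟨S, Ψ_l⟩ Ψ_l`, the orthogonal projection of `S` onto
`W_j = span {Ψ_1, …, Ψ_j}` (indices `0, …, j-1` in `0`-indexed notation). -/
noncomputable def basisProj (Ψ : HilbertBasis ℕ ℝ 𝒮) (j : ℕ) (S : 𝒮) : 𝒮 :=
  ∑ l ∈ Finset.range j, ⟪S, Ψ l⟫ • Ψ l

/-- `W_j = span {Ψ_1, …, Ψ_j}` (i.e. the span of `Ψ 0, …, Ψ (j-1)`). -/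
def basisSpan (Ψ : HilbertBasis ℕ ℝ 𝒮) (j : ℕ) : Submodule ℝ 𝒮 :=
  Submodule.span ℝ ((fun l => Ψ l) '' Set.Iio j)

/-- `ι(S, δ) = min {j ≥ 1 : ‖S - P_j(S)‖_𝒮 < δ}`. -/
noncomputable def iotaDim (Ψ : HilbertBasis ℕ ℝ 𝒮) (S : 𝒮) (δ : ℝ) : ℕ :=
  sInf {j | 1 ≤ j ∧ ‖S - basisProj Ψ j S‖ < δ}

/-!
The residual `S ↦ S - P_j S` is linear and `1`-Lipschitz, so it moves by at most `‖Ĉ_n - C‖ < ℛ(n)`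
when `C` is replaced by `Ĉ_n`. For `j = q` the residual of `C` vanishes, hence that of `Ĉ_n` is
below `ℛ(n) < δ_n`; for `j < q` the residual of `C` has norm at least `|a_q|`, hence that of `Ĉ_n`
is above `|a_q| - ℛ(n)`, which exceeds `δ_n` as soon as `(2 + ε) ℛ(n) < |a_q|`.
-/

section BasisProj

variable (Ψ : HilbertBasis ℕ ℝ 𝒮)

lemma inner_basisProj_basis (j l : ℕ) (S : 𝒮) :
    ⟪basisProj Ψ j S, Ψ l⟫ = if l < j then ⟪S, Ψ l⟫ else 0 := by
  simp [basisProj, sum_inner, real_inner_smul_left, orthonormal_iff_ite.mp Ψ.orthonormal]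

lemma inner_sub_basisProj_basis (j l : ℕ) (S : 𝒮) :
    ⟪S - basisProj Ψ j S, Ψ l⟫ = if l < j then 0 else ⟪S, Ψ l⟫ := by
  rw [inner_sub_left, inner_basisProj_basis]
  split_ifs <;> simp

lemma inner_sub_basisProj_basisProj (j : ℕ) (S : 𝒮) :
    ⟪S - basisProj Ψ j S, basisProj Ψ j S⟫ = 0 := by
  nth_rw 2 [basisProj]
  refine (inner_sum ..).trans (Finset.sum_eq_zero fun l hl => ?_)
  rw [real_inner_smul_right, inner_sub_basisProj_basis, if_pos (Finset.mem_range.mp hl),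
    mul_zero]

lemma norm_sub_basisProj_le (j : ℕ) (S : 𝒮) : ‖S - basisProj Ψ j S‖ ≤ ‖S‖ := by
  have pythagoras := norm_add_sq_eq_norm_sq_add_norm_sq_real (inner_sub_basisProj_basisProj Ψ j S)
  rw [sub_add_cancel] at pythagoras
  nlinarith [norm_nonneg S, norm_nonneg (S - basisProj Ψ j S),
    mul_self_nonneg ‖basisProj Ψ j S‖]

lemma basisProj_sub (j : ℕ) (S T : 𝒮) :
    basisProj Ψ j (S - T) = basisProj Ψ j S - basisProj Ψ j T := by
  simp only [basisProj, inner_sub_left, sub_smul, Finset.sum_sub_distrib]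

lemma norm_sub_basisProj_sub_le (j : ℕ) (S T : 𝒮) :
    ‖(S - basisProj Ψ j S) - (T - basisProj Ψ j T)‖ ≤ ‖S - T‖ := by
  have := norm_sub_basisProj_le Ψ j (S - T)
  rwa [basisProj_sub, sub_sub_sub_comm] at this

lemma basisProj_eq_self {q : ℕ} {C : 𝒮} (hzero : ∀ l, q ≤ l → ⟪C, Ψ l⟫ = 0) :
    basisProj Ψ q C = C := by
  have hrepr : HasSum (fun l => ⟪C, Ψ l⟫ • Ψ l) C := by
    simpa [Ψ.repr_apply_apply, real_inner_comm] using Ψ.hasSum_repr C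
  refine (hasSum_sum_of_ne_finset_zero fun l hl => ?_).unique hrepr
  rw [hzero l (by simpa using hl), zero_smul]

lemma abs_inner_le_norm_sub_basisProj {j l : ℕ} (hl : j ≤ l) (S : 𝒮) :
    |⟪S, Ψ l⟫| ≤ ‖S - basisProj Ψ j S‖ := by
  have hcoeff := inner_sub_basisProj_basis Ψ j l S
  rw [if_neg (by omega)] at hcoeff
  simpa [hcoeff, Ψ.orthonormal.1 l] using abs_real_inner_le_norm (S - basisProj Ψ j S) (Ψ l)

end BasisProj

lemma iotaDim_eq_of_forall_lt_le {Ψ : HilbertBasis ℕ ℝ 𝒮} {S : 𝒮} {δ : ℝ} {q : ℕ} (hq : 1 ≤ q)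
    (hmem : ‖S - basisProj Ψ q S‖ < δ) (hlow : ∀ j < q, δ ≤ ‖S - basisProj Ψ j S‖) :
    iotaDim Ψ S δ = q := by
  have hqmem : q ∈ {j | 1 ≤ j ∧ ‖S - basisProj Ψ j S‖ < δ} := ⟨hq, hmem⟩
  refine le_antisymm (Nat.sInf_le hqmem) (not_lt.mp fun hlt => ?_)
  exact (hlow _ hlt).not_gt (Nat.sInf_mem ⟨q, hqmem⟩).2

lemma iotaDim_eq_of_norm_sub_lt {Ψ : HilbertBasis ℕ ℝ 𝒮} {C S : 𝒮} {δ r : ℝ} {q : ℕ} (hq : 1 ≤ q)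
    (hzero : ∀ l, q ≤ l → ⟪C, Ψ l⟫ = 0) (hcoeff : δ + r ≤ |⟪C, Ψ (q - 1)⟫|)
    (hSC : ‖S - C‖ < r) (hrδ : r ≤ δ) : iotaDim Ψ S δ = q := by
  refine iotaDim_eq_of_forall_lt_le hq ?_ fun j hj => ?_
  · calc ‖S - basisProj Ψ q S‖ = ‖(S - basisProj Ψ q S) - (C - basisProj Ψ q C)‖ := by
          rw [basisProj_eq_self Ψ hzero, sub_self, sub_zero]
      _ ≤ ‖S - C‖ := norm_sub_basisProj_sub_le Ψ q S C
      _ < δ := hSC.trans_le hrδ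
  · have hC := abs_inner_le_norm_sub_basisProj Ψ (show j ≤ q - 1 by omega) C
    have hmove : ‖C - basisProj Ψ j C‖ - ‖S - basisProj Ψ j S‖ ≤ ‖S - C‖ :=
      (norm_sub_norm_le _ _).trans <|
        (norm_sub_basisProj_sub_le Ψ j C S).trans_eq (norm_sub_rev C S)
    linarith

theorem finite_expansion_detection_given_basis_general
    {𝒮 : Type*} [NormedAddCommGroup 𝒮] [InnerProductSpace ℝ 𝒮]
    {Ω : Type*} [MeasurableSpace Ω] (ℙ : Measure Ω)
    (Ψ : HilbertBasis ℕ ℝ 𝒮)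
    (Chat : ℕ → Ω → 𝒮)
    (C : 𝒮)
    (R : ℕ → ℝ)
    (hRlim : Tendsto R atTop (nhds 0))
    (hrate : ∀ᵐ ω ∂ℙ, ∀ᶠ n in atTop, ‖Chat n ω - C‖ < R n)
    (ε : ℝ) (hε : 0 < ε) (δ : ℕ → ℝ) (hδ : ∀ n, δ n = (1 + ε) * R n)
    (q : ℕ) (hq : 1 ≤ q) (hcq : ⟪C, Ψ (q - 1)⟫ ≠ 0)
    (hzero : ∀ l, q ≤ l → ⟪C, Ψ l⟫ = 0) :
    ∀ᵐ ω ∂ℙ, ∀ᶠ n in atTop, iotaDim Ψ (Chat n ω) (δ n) = q := by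
  have hsmall : ∀ᶠ n in atTop, (2 + ε) * R n < |⟪C, Ψ (q - 1)⟫| :=
    (hRlim.const_mul (2 + ε)).eventually_lt_const (by simpa using hcq)
  filter_upwards [hrate] with ω hω
  filter_upwards [hω, hsmall] with n hclose hn
  have hRpos : 0 < R n := (norm_nonneg _).trans_lt hclose
  refine iotaDim_eq_of_norm_sub_lt hq hzero ?_ hclose ?_ <;> rw [hδ] <;> nlinarith

/-- Under Assumption 1, if `C = ∑_{l=1}^{q} a_l Ψ_l` with `a_q ≠ 0` for some
finite `q ≥ 1` (i.e. `⟨C, Ψ_q⟩ ≠ 0` and `⟨C, Ψ_l⟩ = 0` for all `l > q`), then almost surely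
`ι(Ĉ_n, δ_n) = q` for all sufficiently large `n`. -/
theorem finite_expansion_detection_given_basis
    {𝒮 : Type*} [NormedAddCommGroup 𝒮] [InnerProductSpace ℝ 𝒮]
    {Ω : Type*} [MeasurableSpace Ω] (ℙ : Measure Ω) [IsProbabilityMeasure ℙ]
    [MeasurableSpace 𝒮] [BorelSpace 𝒮]
    (Ψ : HilbertBasis ℕ ℝ 𝒮)
    (Chat : ℕ → Ω → 𝒮) (hChat : ∀ n, Measurable (Chat n))
    (C : 𝒮)
    (R : ℕ → ℝ) (hRpos : ∀ n, 0 < R n) (hRanti : StrictAnti R)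
    (hRlim : Tendsto R atTop (nhds 0))
    (hrate : ∀ᵐ ω ∂ℙ, ∀ᶠ n in atTop, ‖Chat n ω - C‖ < R n)
    (ε : ℝ) (hε : 0 < ε) (δ : ℕ → ℝ) (hδ : ∀ n, δ n = (1 + ε) * R n)
    (q : ℕ) (hq : 1 ≤ q) (hcq : ⟪C, Ψ (q - 1)⟫ ≠ 0)
    (hzero : ∀ l, q ≤ l → ⟪C, Ψ l⟫ = 0) :
    ∀ᵐ ω ∂ℙ, ∀ᶠ n in atTop, iotaDim Ψ (Chat n ω) (δ n) = q :=
  finite_expansion_detection_given_basis_general ℙ Ψ Chat C R hRlim hrate ε hε δ hδ q hq hcq hzero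
end
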